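/- Let p be a prime and α = (a_1,…,a_k) ∈ F_p^k. Suppose there is a positive integer t ≤ k/2 such that a_t ≠ a_{t+1} and a_{t+1} = a_{t+2} = ⋯ = a_k. Then f_α(p, n) ≤ (1 + o(1))·(t!·n)^{1/t}; that is, limsup_{n→∞} f_α(p, n)/(t!·n)^{1/t} ≤ 1. -/

import Mathlib

open Filter

/-- A family `F` of subsets of `[n]` (modeled as `Fin n`) is `α`-intersecting modulo `p` for a
vector `α ∈ F_p^k` if for each `ℓ ∈ [k]`, any `ℓ` pairwise distinct members of `F`
have an intersection of cardinality congruent to `a_ℓ` modulo `p`.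
Here `α ⟨ℓ-1,_⟩` denotes the coordinate `a_ℓ` (0-based indexing of a 1-based vector). -/
def IsIntersectingP (p k n : ℕ) (α : Fin k → ZMod p) (F : Finset (Finset (Fin n))) : Prop :=
  ∀ (ℓ : Fin k) (S : Finset (Finset (Fin n))), S ⊆ F → S.card = ℓ.1 + 1 →
    ((S.inf id).card : ZMod p) = α ℓ

/-- `fMaxP p k n α` is the maximum size of an `α`-intersecting (mod `p`) family of
subsets of `[n]`. -/
noncomputable def fMaxP (p k n : ℕ) (α : Fin k → ZMod p) : ℕ :=
  sSup {m | ∃ F : Finset (Finset (Fin n)), IsIntersectingP p k n α F ∧ F.card = m}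

open Finset Topology

/-!
For a `t`-subfamily `T ⊆ F`, the set `⋂ T` has size `≡ a_t`, while for distinct `T, T'` the set
`⋂ T ∩ ⋂ T'` is the intersection of between `t + 1` and `2t` members of `F`, so its size is
`≡ a_{t+1} ≠ a_t`. Thus `T ↦ ⋂ T` is injective, and its image is a family with all sizes `≡ a` and
all pairwise intersections `≡ b ≠ a`. The vectors `(1_A, 1) ∈ 𝔽_p^{n+1}` of such a family are
linearly independent, since pairing with `(x, s) ↦ ∑_{i ∈ B} x_i - b s` kills every vector but
the one of `B`. Hence `C(|F|, t) ≤ n + 1`, i.e. `|F| ≤ (t! (n + 1))^{1/t} + t`.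
-/

section ModularFisherInequality

variable {K ι : Type*} [Field K] [DecidableEq ι]

def extendedIndicator (A : Finset ι) : (ι → K) × K :=
  (fun i => if i ∈ A then 1 else 0, 1)

def intersectionFunctional (b : K) (B : Finset ι) : (ι → K) × K →ₗ[K] K :=
  (∑ i ∈ B, LinearMap.proj i) ∘ₗ LinearMap.fst K (ι → K) K - b • LinearMap.snd K (ι → K) K

lemma intersectionFunctional_extendedIndicator (b : K) (A B : Finset ι) :
    intersectionFunctional b B (extendedIndicator A) = ((A ∩ B).card : K) - b := by
  simp [intersectionFunctional, extendedIndicator, sum_ite_mem, inter_comm]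

theorem card_le_card_add_one_of_modular_intersections [Fintype ι] {a b : K} (hab : a ≠ b)
    (G : Finset (Finset ι)) (hcard : ∀ A ∈ G, (A.card : K) = a)
    (hinter : ∀ A ∈ G, ∀ B ∈ G, A ≠ B → ((A ∩ B).card : K) = b) :
    G.card ≤ Fintype.card ι + 1 := by
  have hli : LinearIndependent K fun A : G => extendedIndicator (K := K) (A : Finset ι) := by
    rw [Fintype.linearIndependent_iff]
    intro c hc B
    have hB := congrArg (intersectionFunctional b (B : Finset ι)) hc
    rw [map_sum, map_zero, ← add_sum_erase _ _ (mem_univ B),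
      sum_eq_zero fun A hA => ?_] at hB
    · simpa [intersectionFunctional_extendedIndicator, hcard _ B.2, sub_ne_zero.mpr hab] using hB
    · rw [map_smul, intersectionFunctional_extendedIndicator,
        hinter _ A.2 _ B.2 fun h => (mem_erase.mp hA).1 (Subtype.ext h), sub_self,
        smul_zero]
  simpa [Module.finrank_prod, Module.finrank_pi] using hli.fintype_card_le_finrank

end ModularFisherInequality

section IntersectingFamily

variable {p k n t : ℕ} {α : Fin k → ZMod p} {F : Finset (Finset (Fin n))}

theorem IsIntersectingP.choose_card_le [Fact p.Prime] (hF : IsIntersectingP p k n α F)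
    (ht : 1 ≤ t) (hk : 2 * t ≤ k) (hne : α ⟨t - 1, by omega⟩ ≠ α ⟨t, by omega⟩)
    (hconst : ∀ i : Fin k, t ≤ i.1 → α i = α ⟨t, by omega⟩) :
    F.card.choose t ≤ n + 1 := by
  have hsmall : ∀ T ∈ F.powersetCard t, ((T.inf id).card : ZMod p) = α ⟨t - 1, by omega⟩ := by
    intro T hT
    rw [mem_powersetCard] at hT
    exact hF _ T hT.1 (by simp only; omega)
  have hlarge : ∀ T ∈ F.powersetCard t, ∀ T' ∈ F.powersetCard t, T ≠ T' →
      ((T.inf id ∩ T'.inf id).card : ZMod p) = α ⟨t, by omega⟩ := by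
    intro T hT T' hT' hTT'
    rw [mem_powersetCard] at hT hT'
    have hlt : t < (T ∪ T').card := by
      by_contra! h
      exact hTT' ((eq_of_subset_of_card_le subset_union_left (h.trans_eq hT.2.symm)).trans
        (eq_of_subset_of_card_le subset_union_right (h.trans_eq hT'.2.symm)).symm)
    have hle : (T ∪ T').card ≤ 2 * t := (card_union_le T T').trans (by omega)
    have hU := hF ⟨(T ∪ T').card - 1, by omega⟩ (T ∪ T') (union_subset hT.1 hT'.1)
      (by simp only; omega)
    rwa [hconst _ (by simp only; omega), inf_union] at hU
  have hinj : Set.InjOn (fun T : Finset (Finset (Fin n)) => T.inf id) (F.powersetCard t) := by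
    intro T hT T' hT' heq
    by_contra hTT'
    have h := hlarge T hT T' hT' hTT'
    rw [← show T.inf id = T'.inf id from heq, inter_self, hsmall T hT] at h
    exact hne h
  rw [← card_powersetCard, ← card_image_of_injOn hinj]
  refine (card_le_card_add_one_of_modular_intersections hne _ ?_ ?_).trans_eq
    (by rw [Fintype.card_fin])
  · simp only [mem_image]
    rintro _ ⟨T, hT, rfl⟩
    exact hsmall T hT
  · simp only [mem_image]
    rintro _ ⟨T, hT, rfl⟩ _ ⟨T', hT', rfl⟩ hTT'
    exact hlarge T hT T' hT' fun h => hTT' (h ▸ rfl)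

end IntersectingFamily

lemma le_rpow_add_of_choose_le {m t N : ℕ} (ht : t ≠ 0) (h : m.choose t ≤ N) :
    (m : ℝ) ≤ ((t.factorial : ℝ) * N) ^ ((1 : ℝ) / t) + t := by
  have hpow : (m + 1 - t) ^ t ≤ t.factorial * N :=
    calc (m + 1 - t) ^ t ≤ m.descFactorial t := Nat.pow_sub_le_descFactorial m t
      _ = t.factorial * m.choose t := Nat.descFactorial_eq_factorial_mul_choose m t
      _ ≤ t.factorial * N := Nat.mul_le_mul_left _ h
  have hroot : ((m + 1 - t : ℕ) : ℝ) ≤ ((t.factorial : ℝ) * N) ^ ((1 : ℝ) / t) := by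
    rw [one_div, ← Real.pow_rpow_inv_natCast (Nat.cast_nonneg (m + 1 - t)) ht]
    gcongr
    exact_mod_cast hpow
  have hm : m ≤ (m + 1 - t) + t := by omega
  calc (m : ℝ) ≤ ((m + 1 - t : ℕ) : ℝ) + t := by exact_mod_cast hm
    _ ≤ _ := by gcongr

lemma tendsto_rpow_add_div_rpow {c r : ℝ} (hc : 0 < c) (hr : 0 < r) (d : ℝ) :
    Tendsto (fun n : ℕ => ((c * (n + 1)) ^ r + d) / (c * n) ^ r) atTop (𝓝 1) := by
  have hden : Tendsto (fun n : ℕ => (c * n) ^ r) atTop atTop :=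
    (tendsto_rpow_atTop hr).comp (tendsto_natCast_atTop_atTop.const_mul_atTop hc)
  have hratio : Tendsto (fun n : ℕ => (1 + 1 / (n : ℝ)) ^ r) atTop (𝓝 1) := by
    have h := ((tendsto_const_nhds (x := (1 : ℝ))).add
      tendsto_one_div_atTop_nhds_zero_nat).rpow_const (p := r) (Or.inr hr.le)
    simpa using h
  have hsum := hratio.add ((tendsto_const_nhds (x := d)).div_atTop hden)
  rw [add_zero] at hsum
  refine hsum.congr' ?_
  filter_upwards [eventually_ge_atTop 1] with n hn
  have hn' : (0 : ℝ) < n := by exact_mod_cast hn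
  rw [add_div, ← Real.div_rpow (by positivity) (by positivity)]
  congr 2
  field_simp

lemma exists_isIntersectingP_card_eq_fMaxP (p k n : ℕ) (α : Fin k → ZMod p) :
    ∃ F, IsIntersectingP p k n α F ∧ F.card = fMaxP p k n α := by
  refine Nat.sSup_mem (s := {m | ∃ F, IsIntersectingP p k n α F ∧ F.card = m})
    ⟨0, ∅, fun ℓ S hS hcard => ?_, card_empty⟩ ⟨2 ^ n, ?_⟩
  · simp [subset_empty.mp hS] at hcard
  · rintro _ ⟨F, -, rfl⟩
    simpa using F.card_le_univ

theorem stmt17 (p : ℕ) (hp : p.Prime) (t k : ℕ) (ht : 1 ≤ t) (hk : 2 * t ≤ k)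
    (α : Fin k → ZMod p)
    (hne : α ⟨t - 1, by omega⟩ ≠ α ⟨t, by omega⟩)
    (hconst : ∀ i : Fin k, t ≤ i.1 → α i = α ⟨t, by omega⟩) :
    limsup (fun n : ℕ => (fMaxP p k n α : ℝ) /
      (((t.factorial : ℝ) * (n : ℝ)) ^ ((1 : ℝ) / (t : ℝ)))) atTop ≤ 1 := by
  have : Fact p.Prime := ⟨hp⟩
  have hchoose : ∀ n, (fMaxP p k n α).choose t ≤ n + 1 := fun n => by
    obtain ⟨F, hF, hcard⟩ := exists_isIntersectingP_card_eq_fMaxP p k n α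
    exact hcard ▸ hF.choose_card_le ht hk hne hconst
  set g : ℕ → ℝ := fun n =>
    (((t.factorial : ℝ) * (n + 1)) ^ ((1 : ℝ) / t) + t) / ((t.factorial : ℝ) * n) ^ ((1 : ℝ) / t)
  have hg : Tendsto g atTop (𝓝 1) :=
    tendsto_rpow_add_div_rpow (by positivity) (by positivity) _
  have hle : ∀ n : ℕ, (fMaxP p k n α : ℝ) / ((t.factorial : ℝ) * n) ^ ((1 : ℝ) / t) ≤ g n :=
    fun n => div_le_div_of_nonneg_right (by
      simpa using le_rpow_add_of_choose_le (by omega) (hchoose n)) (by positivity)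
  calc _ ≤ limsup g atTop := limsup_le_limsup (Eventually.of_forall hle)
        (isCoboundedUnder_le_of_le atTop fun n => by positivity) hg.isBoundedUnder_le
    _ = 1 := hg.limsup_eq
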